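/- arXiv:2409.14777 — 2 statements merged into one kernel-verified Lean document; each statement's English description precedes it below -/
import Mathlib

section
/- Let $\alpha>0$ and define $K_1(\xi,\eta) = -\frac{1}{\eta^2}\cdot\frac{2\alpha}{(\xi^2-\eta^2)^2+2\alpha^2(\xi^2+\eta^2)}$ and $K_2(\xi,\eta) = -\frac{1}{\eta^2}\cdot\frac{\alpha^2+\xi^2-\eta^2}{(\xi^2-\eta^2)^2+2\alpha^2(\xi^2+\eta^2)}$, and let $K(\xi,\eta) = \frac{\alpha}{2}K_1(\xi,\eta) + K_2(\xi,\eta)$. Then for all nonzero $\xi, \eta \in \mathbb{R}$, $K(\xi,\eta) + K(\eta,\xi) = -\frac{1}{\xi^2\eta^2}$. -/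
/-!
Both `K₁` and `K₂` share the denominator `D(ξ,η) = (ξ² - η²)² + 2α²(ξ² + η²)`, which is symmetric
and positive for `α > 0`, so `K(ξ,η) = -(2α² + ξ² - η²) / (η² D)`. Over the common denominator
`ξ²η²D` the symmetrized numerator is `ξ²(2α² + ξ² - η²) + η²(2α² + η² - ξ²) = D`.
-/

theorem one_div_mul_div_add_one_div_mul_div_eq {F : Type*} [Field F] {a b c : F}
    (ha : a ≠ 0) (hb : b ≠ 0) (hD : (a - b) ^ 2 + 2 * c * (a + b) ≠ 0) :
    1 / b * ((2 * c + a - b) / ((a - b) ^ 2 + 2 * c * (a + b)))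
      + 1 / a * ((2 * c + b - a) / ((b - a) ^ 2 + 2 * c * (b + a))) = 1 / (a * b) := by
  have hD' : (b - a) ^ 2 + 2 * c * (b + a) = (a - b) ^ 2 + 2 * c * (a + b) := by ring
  rw [hD']
  field_simp
  ring

/-- Symmetrization identity for the covariance kernel:
with `K = (α/2)K₁ + K₂`, one has `K(ξ,η) + K(η,ξ) = -1/(ξ²η²)` for all nonzero `ξ, η`. -/
theorem stmt6 (α : ℝ) (hα : 0 < α) (K1 K2 K : ℝ → ℝ → ℝ)
    (hK1 : ∀ ξ η : ℝ, K1 ξ η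
      = -(1 / η ^ 2) * (2 * α / ((ξ ^ 2 - η ^ 2) ^ 2 + 2 * α ^ 2 * (ξ ^ 2 + η ^ 2))))
    (hK2 : ∀ ξ η : ℝ, K2 ξ η
      = -(1 / η ^ 2) * ((α ^ 2 + ξ ^ 2 - η ^ 2) / ((ξ ^ 2 - η ^ 2) ^ 2 + 2 * α ^ 2 * (ξ ^ 2 + η ^ 2))))
    (hK : ∀ ξ η : ℝ, K ξ η = α / 2 * K1 ξ η + K2 ξ η) :
    ∀ ξ η : ℝ, ξ ≠ 0 → η ≠ 0 → K ξ η + K η ξ = -(1 / (ξ ^ 2 * η ^ 2)) := by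
  intro ξ η hξ hη
  have hK_eq : ∀ x y : ℝ, K x y
      = -(1 / y ^ 2 * ((2 * α ^ 2 + x ^ 2 - y ^ 2) / ((x ^ 2 - y ^ 2) ^ 2 + 2 * α ^ 2 * (x ^ 2 + y ^ 2)))) := by
    intro x y
    rw [hK, hK1, hK2]
    ring
  have hD : (ξ ^ 2 - η ^ 2) ^ 2 + 2 * α ^ 2 * (ξ ^ 2 + η ^ 2) ≠ 0 := by positivity
  rw [hK_eq, hK_eq, ← one_div_mul_div_add_one_div_mul_div_eq (pow_ne_zero 2 hξ) (pow_ne_zero 2 hη) hD]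
  ring
end

section
/- Let $\alpha > 0$ and $\xi \in \mathbb{R}$. All eigenvalues of the $2\times 2$ real matrix $A(\xi) = \begin{pmatrix} 0 & 1 \\ -\xi^2 & -\alpha \end{pmatrix}$ have real part at most $-\min(\alpha/2,\, \xi^2/\alpha)$; in particular for $\xi \neq 0$ both eigenvalues have strictly negative real part. -/
open Complex Matrix

/-
An eigenvalue `l` of `A(ξ)` is a root of the characteristic polynomial `l² + α l + ξ²`
(an eigenvector has the form `(v₀, l v₀)` with `v₀ ≠ 0`). Writing `l = x + iy`, the imaginary
part of that equation reads `y (2x + α) = 0`: either the root is complex and `x = -α/2`, or it is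
real and `α x = -ξ² - x² ≤ -ξ²`.
-/

theorem quadratic_eq_zero_of_companion_mulVec_eq_smul {R : Type*} [CommRing R] [IsDomain R]
    {b c l : R} {v : Fin 2 → R} (hv : v ≠ 0) (h : !![0, 1; -c, -b] *ᵥ v = l • v) :
    l ^ 2 + b * l + c = 0 := by
  have h0 : v 1 = l * v 0 := by simpa [mulVec, dotProduct] using congrFun h 0
  have h1 : -(c * v 0) + -(b * v 1) = l * v 1 := by simpa [mulVec, dotProduct] using congrFun h 1
  have hv0 : v 0 ≠ 0 := by
    intro h00
    exact hv (funext fun i => by fin_cases i <;> simp [h00, h0])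
  have : (l ^ 2 + b * l + c) * v 0 = 0 := by
    rw [h0] at h1
    linear_combination -h1
  exact (mul_eq_zero.mp this).resolve_right hv0

theorem Complex.re_le_of_quadratic_eq_zero {b c : ℝ} (hb : 0 < b) {z : ℂ}
    (hz : z ^ 2 + b * z + c = 0) : z.re ≤ -min (b / 2) (c / b) := by
  have hre : z.re ^ 2 - z.im ^ 2 + b * z.re + c = 0 := by
    simpa [pow_two] using congrArg re hz
  have him : z.im * (2 * z.re + b) = 0 := by
    have := congrArg im hz
    simp only [add_im, mul_im, pow_two, ofReal_re, ofReal_im, zero_im] at this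
    linear_combination this
  rcases mul_eq_zero.mp him with him0 | hre_eq
  · have : z.re ≤ -(c / b) := by
      rw [← neg_div, le_div_iff₀ hb]
      nlinarith [sq_nonneg z.re]
    exact this.trans (neg_le_neg (min_le_right _ _))
  · have : z.re = -(b / 2) := by linarith
    exact this.le.trans (neg_le_neg (min_le_left _ _))

/-- Every (complex) eigenvalue of `A(ξ) = !![0, 1; -ξ², -α]` has real part at most
`-min(α/2, ξ²/α)`; in particular for `ξ ≠ 0` both eigenvalues have negative real part. -/
theorem stmt13 (α ξ : ℝ) (hα : 0 < α) :
    ∀ (l : ℂ) (v : Fin 2 → ℂ), v ≠ 0 →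
      (!![(0 : ℂ), 1; -(ξ : ℂ) ^ 2, -(α : ℂ)]).mulVec v = l • v →
      l.re ≤ -min (α / 2) (ξ ^ 2 / α) ∧ (ξ ≠ 0 → l.re < 0) := by
  intro l v hv hA
  have hchar : l ^ 2 + (α : ℂ) * l + ((ξ ^ 2 : ℝ) : ℂ) = 0 := by
    push_cast
    exact quadratic_eq_zero_of_companion_mulVec_eq_smul hv (by simpa using hA)
  have hle := Complex.re_le_of_quadratic_eq_zero hα hchar
  refine ⟨hle, fun hξ => ?_⟩
  have : 0 < min (α / 2) (ξ ^ 2 / α) := lt_min (half_pos hα) (by positivity)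
  linarith
end
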